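/- arXiv:2303.00937 — 4 statements merged into one kernel-verified Lean document; each statement's English description precedes it below -/
import Mathlib

section
/- Let 0 < m < L, 0 < α ≤ 2/L, σ ≥ 0, and U ≥ 0. Let T be the set of all tuples (ρ, λ₁, λ₂) of nonnegative real numbers such that the symmetric 3×3 matrix with rows (1−ρ²−2λ₁Lm, −α+λ₁(L+m), 1), (−α+λ₁(L+m), α²−2λ₁, −α), (1, −α, 1−λ₂) is negative semidefinite. Then (μ(m,L,α) √U + σ)² is the greatest lower bound of the set { ρ² U + λ₂ σ² : (ρ, λ₁, λ₂) ∈ T }. -/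
lemma sum_expand (ρ l1 l2 m L α : ℝ) (z : Fin 3 → ℝ) :
    ∑ k, ∑ l, z k *
      (!![1 - ρ ^ 2 - 2 * l1 * L * m, -α + l1 * (L + m), 1;
          -α + l1 * (L + m), α ^ 2 - 2 * l1, -α;
          1, -α, 1 - l2] k l) * z l =
    z 0 * z 0 * (1 - ρ ^ 2 - 2 * l1 * L * m) + 2 * (z 0 * z 1) * (-α + l1 * (L + m))
      + 2 * (z 0 * z 2) + z 1 * z 1 * (α ^ 2 - 2 * l1) - 2 * (z 1 * z 2) * α
      + z 2 * z 2 * (1 - l2) := by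
  simp [Fin.sum_univ_three, Matrix.cons_val_zero, Matrix.cons_val_one, Matrix.head_cons]
  ring

lemma keyA (m L α s x g e : ℝ) (hmL : m < L) (hα : 0 < α) (hs : 0 < s)
    (hA : α * (m + L) ≤ 2) :
    s * (L - m) * (x - α * g + e) ^ 2 ≤
      (1 + s) * (L - m) * (1 - m * α) ^ 2 * x ^ 2 + s * (1 + s) * (L - m) * e ^ 2
        + 2 * (1 + s) * α * (1 - m * α) * ((g - L * x) * (g - m * x)) := by
  nlinarith [mul_nonneg (by linarith : (0:ℝ) ≤ L - m) (sq_nonneg (x - α * g - s * e)),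
    mul_nonneg (mul_nonneg (mul_nonneg (by linarith : (0:ℝ) ≤ 1 + s) hα.le)
      (by linarith : (0:ℝ) ≤ 2 - α * (m + L))) (sq_nonneg (g - m * x))]

lemma keyB (m L α s x g e : ℝ) (hmL : m < L) (hα : 0 < α) (hs : 0 < s)
    (hB : 2 ≤ α * (m + L)) :
    s * (L - m) * (x - α * g + e) ^ 2 ≤
      (1 + s) * (L - m) * (α * L - 1) ^ 2 * x ^ 2 + s * (1 + s) * (L - m) * e ^ 2
        + 2 * (1 + s) * α * (α * L - 1) * ((g - L * x) * (g - m * x)) := by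
  nlinarith [mul_nonneg (by linarith : (0:ℝ) ≤ L - m) (sq_nonneg (x - α * g - s * e)),
    mul_nonneg (mul_nonneg (mul_nonneg (by linarith : (0:ℝ) ≤ 1 + s) hα.le)
      (by linarith : (0:ℝ) ≤ α * (m + L) - 2)) (sq_nonneg (g - L * x))]

lemma feas_core (m L α s μ x g e : ℝ) (hmL : m < L) (hs : 0 < s)
    (hkey : s * (L - m) * (x - α * g + e) ^ 2 ≤
      (1 + s) * (L - m) * μ ^ 2 * x ^ 2 + s * (1 + s) * (L - m) * e ^ 2
        + 2 * (1 + s) * α * μ * ((g - L * x) * (g - m * x))) :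
    x * x * (1 - (μ * Real.sqrt ((1 + s) / s)) ^ 2 - 2 * ((1 + s) * α * μ / (s * (L - m))) * L * m)
      + 2 * (x * g) * (-α + ((1 + s) * α * μ / (s * (L - m))) * (L + m))
      + 2 * (x * e) + g * g * (α ^ 2 - 2 * ((1 + s) * α * μ / (s * (L - m))))
      - 2 * (g * e) * α + e * e * (1 - (1 + s)) ≤ 0 := by
  have hLm : (0 : ℝ) < L - m := by linarith
  have hk2 : (μ * Real.sqrt ((1 + s) / s)) ^ 2 = μ ^ 2 * ((1 + s) / s) := by
    rw [mul_pow, Real.sq_sqrt (by positivity)]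
  rw [hk2]
  rw [← sub_nonneg]
  have h0 : (0:ℝ) < s * (L - m) := by positivity
  rw [← mul_nonneg_iff_of_pos_right h0]
  have hEq : (0 - (x * x * (1 - μ ^ 2 * ((1 + s) / s) - 2 * ((1 + s) * α * μ / (s * (L - m))) * L * m)
      + 2 * (x * g) * (-α + ((1 + s) * α * μ / (s * (L - m))) * (L + m))
      + 2 * (x * e) + g * g * (α ^ 2 - 2 * ((1 + s) * α * μ / (s * (L - m))))
      - 2 * (g * e) * α + e * e * (1 - (1 + s)))) * (s * (L - m)) =
      ((1 + s) * (L - m) * μ ^ 2 * x ^ 2 + s * (1 + s) * (L - m) * e ^ 2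
        + 2 * (1 + s) * α * μ * ((g - L * x) * (g - m * x))) - s * (L - m) * (x - α * g + e) ^ 2 := by
    field_simp
    ring
  rw [hEq]
  linarith

lemma choose_s (a b ε : ℝ) (ha : 0 ≤ a) (hb : 0 ≤ b) (hε : 0 < ε) :
    ∃ s : ℝ, 0 < s ∧ a ^ 2 / s + s * b ^ 2 - 2 * a * b ≤ ε := by
  rcases eq_or_lt_of_le hb with h0 | h0
  · refine ⟨a ^ 2 / ε + 1, by positivity, ?_⟩
    rw [← h0]
    have hs : (0:ℝ) < a ^ 2 / ε + 1 := by positivity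
    have h1 : a ^ 2 / (a ^ 2 / ε + 1) ≤ ε := by
      rw [div_le_iff₀ hs]
      have h2 : a ^ 2 / ε * ε = a ^ 2 := div_mul_cancel₀ _ hε.ne'
      nlinarith [h2, hε.le, sq_nonneg a]
    nlinarith [h1]
  · refine ⟨(a * b + ε) / b ^ 2, by positivity, ?_⟩
    have hbb : (0:ℝ) < b ^ 2 := by positivity
    have h1 : (a * b + ε) / b ^ 2 * b ^ 2 = a * b + ε := div_mul_cancel₀ _ hbb.ne'
    have h2 : a ^ 2 / ((a * b + ε) / b ^ 2) ≤ a * b := by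
      have hspos : (0:ℝ) < (a * b + ε) / b ^ 2 := by positivity
      rw [div_le_iff₀ hspos, ← mul_div_assoc, le_div_iff₀ hbb]
      nlinarith [mul_nonneg ha h0.le, hε.le, sq_nonneg (a*b)]
    linarith [h1, h2]

theorem stmt_16 (m L α σ U : ℝ)
    (hm : 0 < m) (hmL : m < L) (hα : 0 < α) (hαL : α ≤ 2 / L)
    (hσ : 0 ≤ σ) (hU : 0 ≤ U) :
    IsGLB { y : ℝ | ∃ ρ l1 l2 : ℝ,
        0 ≤ ρ ∧ 0 ≤ l1 ∧ 0 ≤ l2 ∧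
        (∀ z : Fin 3 → ℝ,
          ∑ k, ∑ l, z k *
            (!![1 - ρ ^ 2 - 2 * l1 * L * m, -α + l1 * (L + m), 1;
                -α + l1 * (L + m), α ^ 2 - 2 * l1, -α;
                1, -α, 1 - l2] k l) * z l ≤ 0) ∧
        y = ρ ^ 2 * U + l2 * σ ^ 2 }
      (((if α ≤ 2 / (m + L) then 1 - m * α else α * L - 1) * Real.sqrt U + σ) ^ 2) := by
  have hL : 0 < L := hm.trans hmL
  have hmLp : 0 < m + L := by linarith
  have hsqU : Real.sqrt U ^ 2 = U := Real.sq_sqrt hU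
  have hsU : 0 ≤ Real.sqrt U := Real.sqrt_nonneg U
  by_cases hcase : α ≤ 2 / (m + L)
  · rw [if_pos hcase]
    have hA : α * (m + L) ≤ 2 := (le_div_iff₀ hmLp).mp hcase
    have hμ : 0 < 1 - m * α := by nlinarith
    constructor
    · rintro y ⟨ρ, l1, l2, hρ, hl1, hl2, hM, rfl⟩
      have h1 := hM ![Real.sqrt U, m * Real.sqrt U, σ]
      rw [sum_expand] at h1
      simp only [Matrix.cons_val_zero, Matrix.cons_val_one, Matrix.head_cons,
        Matrix.cons_val_two, Matrix.tail_cons] at h1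
      nlinarith [h1, hsqU, sq_nonneg ρ, hσ, hU, hsU]
    · intro b hb
      refine le_of_forall_pos_le_add fun ε hε => ?_
      obtain ⟨s, hs, hval⟩ := choose_s ((1 - m * α) * Real.sqrt U) σ ε
        (mul_nonneg hμ.le hsU) hσ hε
      have hfeas : ∀ z : Fin 3 → ℝ,
          ∑ k, ∑ l, z k *
            (!![1 - ((1 - m * α) * Real.sqrt ((1 + s) / s)) ^ 2
                  - 2 * ((1 + s) * α * (1 - m * α) / (s * (L - m))) * L * m,
                -α + ((1 + s) * α * (1 - m * α) / (s * (L - m))) * (L + m), 1;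
                -α + ((1 + s) * α * (1 - m * α) / (s * (L - m))) * (L + m),
                α ^ 2 - 2 * ((1 + s) * α * (1 - m * α) / (s * (L - m))), -α;
                1, -α, 1 - (1 + s)] k l) * z l ≤ 0 := by
        intro z
        rw [sum_expand]
        exact feas_core m L α s (1 - m * α) (z 0) (z 1) (z 2) hmL hs
          (keyA m L α s (z 0) (z 1) (z 2) hmL hα hs hA)
      have hmem : ((1 - m * α) * Real.sqrt ((1 + s) / s)) ^ 2 * U + (1 + s) * σ ^ 2 ∈
          { y : ℝ | ∃ ρ l1 l2 : ℝ,
            0 ≤ ρ ∧ 0 ≤ l1 ∧ 0 ≤ l2 ∧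
            (∀ z : Fin 3 → ℝ,
              ∑ k, ∑ l, z k *
                (!![1 - ρ ^ 2 - 2 * l1 * L * m, -α + l1 * (L + m), 1;
                    -α + l1 * (L + m), α ^ 2 - 2 * l1, -α;
                    1, -α, 1 - l2] k l) * z l ≤ 0) ∧
            y = ρ ^ 2 * U + l2 * σ ^ 2 } :=
        ⟨(1 - m * α) * Real.sqrt ((1 + s) / s),
         (1 + s) * α * (1 - m * α) / (s * (L - m)), 1 + s,
         mul_nonneg hμ.le (Real.sqrt_nonneg _),
         div_nonneg (mul_nonneg (mul_nonneg (by linarith) hα.le) hμ.le)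
           (mul_nonneg hs.le (by linarith)),
         by linarith, hfeas, rfl⟩
      have hb1 := hb hmem
      have hρ2 : ((1 - m * α) * Real.sqrt ((1 + s) / s)) ^ 2 = (1 - m * α) ^ 2 * ((1 + s) / s) := by
        rw [mul_pow, Real.sq_sqrt (by positivity)]
      have e1 : (1 - m * α) ^ 2 * ((1 + s) / s) * U
          = (1 - m * α) ^ 2 * U + ((1 - m * α) * Real.sqrt U) ^ 2 / s := by
        rw [mul_pow, hsqU]
        field_simp
        ring
      have e2 : ((1 - m * α) * Real.sqrt U + σ) ^ 2
          = (1 - m * α) ^ 2 * U + 2 * ((1 - m * α) * Real.sqrt U) * σ + σ ^ 2 := by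
        linear_combination (1 - m * α) ^ 2 * hsqU
      rw [hρ2, e1] at hb1
      linarith [hb1, hval, e2]
  · rw [if_neg hcase]
    push_neg at hcase
    have hB : 2 ≤ α * (m + L) := le_of_lt ((div_lt_iff₀ hmLp).mp hcase)
    have hμ : 0 < α * L - 1 := by nlinarith
    constructor
    · rintro y ⟨ρ, l1, l2, hρ, hl1, hl2, hM, rfl⟩
      have h1 := hM ![Real.sqrt U, L * Real.sqrt U, -σ]
      rw [sum_expand] at h1
      simp only [Matrix.cons_val_zero, Matrix.cons_val_one, Matrix.head_cons,
        Matrix.cons_val_two, Matrix.tail_cons] at h1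
      nlinarith [h1, hsqU, sq_nonneg ρ, hσ, hU, hsU]
    · intro b hb
      refine le_of_forall_pos_le_add fun ε hε => ?_
      obtain ⟨s, hs, hval⟩ := choose_s ((α * L - 1) * Real.sqrt U) σ ε
        (mul_nonneg hμ.le hsU) hσ hε
      have hfeas : ∀ z : Fin 3 → ℝ,
          ∑ k, ∑ l, z k *
            (!![1 - ((α * L - 1) * Real.sqrt ((1 + s) / s)) ^ 2
                  - 2 * ((1 + s) * α * (α * L - 1) / (s * (L - m))) * L * m,
                -α + ((1 + s) * α * (α * L - 1) / (s * (L - m))) * (L + m), 1;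
                -α + ((1 + s) * α * (α * L - 1) / (s * (L - m))) * (L + m),
                α ^ 2 - 2 * ((1 + s) * α * (α * L - 1) / (s * (L - m))), -α;
                1, -α, 1 - (1 + s)] k l) * z l ≤ 0 := by
        intro z
        rw [sum_expand]
        exact feas_core m L α s (α * L - 1) (z 0) (z 1) (z 2) hmL hs
          (keyB m L α s (z 0) (z 1) (z 2) hmL hα hs hB)
      have hmem : ((α * L - 1) * Real.sqrt ((1 + s) / s)) ^ 2 * U + (1 + s) * σ ^ 2 ∈
          { y : ℝ | ∃ ρ l1 l2 : ℝ,
            0 ≤ ρ ∧ 0 ≤ l1 ∧ 0 ≤ l2 ∧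
            (∀ z : Fin 3 → ℝ,
              ∑ k, ∑ l, z k *
                (!![1 - ρ ^ 2 - 2 * l1 * L * m, -α + l1 * (L + m), 1;
                    -α + l1 * (L + m), α ^ 2 - 2 * l1, -α;
                    1, -α, 1 - l2] k l) * z l ≤ 0) ∧
            y = ρ ^ 2 * U + l2 * σ ^ 2 } :=
        ⟨(α * L - 1) * Real.sqrt ((1 + s) / s),
         (1 + s) * α * (α * L - 1) / (s * (L - m)), 1 + s,
         mul_nonneg hμ.le (Real.sqrt_nonneg _),
         div_nonneg (mul_nonneg (mul_nonneg (by linarith) hα.le) hμ.le)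
           (mul_nonneg hs.le (by linarith)),
         by linarith, hfeas, rfl⟩
      have hb1 := hb hmem
      have hρ2 : ((α * L - 1) * Real.sqrt ((1 + s) / s)) ^ 2 = (α * L - 1) ^ 2 * ((1 + s) / s) := by
        rw [mul_pow, Real.sq_sqrt (by positivity)]
      have e1 : (α * L - 1) ^ 2 * ((1 + s) / s) * U
          = (α * L - 1) ^ 2 * U + ((α * L - 1) * Real.sqrt U) ^ 2 / s := by
        rw [mul_pow, hsqU]
        field_simp
        ring
      have e2 : ((α * L - 1) * Real.sqrt U + σ) ^ 2
          = (α * L - 1) ^ 2 * U + 2 * ((α * L - 1) * Real.sqrt U) * σ + σ ^ 2 := by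
        linear_combination (α * L - 1) ^ 2 * hsqU
      rw [hρ2, e1] at hb1
      linarith [hb1, hval, e2]
end

section
/- Let 0 ≤ μ < 1, σ ≥ 0, and a > 0, and define U* := ( (μσ + √(σ² + a²(1−μ²))) / (1−μ²) )². Then: (i) U* = (μ√(U*) + σ)² + a²; (ii) (μ + σ/√(U*))² = 1 − a²/U* ≤ 1; and (iii) any sequence (Û_t)_{t≥0} of nonnegative reals with Û_{t+1} = (μ √(Û_t) + σ)² + a² for all t satisfies Û_t ≤ (μ + σ/√(U*))^t Û₀ + U* for every t ≥ 0. -/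
set_option maxHeartbeats 1000000 in
theorem stmt_17 (μ σ a : ℝ) (hμ0 : 0 ≤ μ) (hμ1 : μ < 1) (hσ : 0 ≤ σ) (ha : 0 < a)
    (Ustar : ℝ)
    (hUstar : Ustar = ((μ * σ + Real.sqrt (σ ^ 2 + a ^ 2 * (1 - μ ^ 2))) / (1 - μ ^ 2)) ^ 2) :
    Ustar = (μ * Real.sqrt Ustar + σ) ^ 2 + a ^ 2 ∧
    ((μ + σ / Real.sqrt Ustar) ^ 2 = 1 - a ^ 2 / Ustar ∧ 1 - a ^ 2 / Ustar ≤ 1) ∧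
    (∀ Uhat : ℕ → ℝ, (∀ t, 0 ≤ Uhat t) →
      (∀ t, Uhat (t + 1) = (μ * Real.sqrt (Uhat t) + σ) ^ 2 + a ^ 2) →
      ∀ t, Uhat t ≤ (μ + σ / Real.sqrt Ustar) ^ t * Uhat 0 + Ustar) := by
  have h1μ : 0 < 1 - μ ^ 2 := by nlinarith
  set D := Real.sqrt (σ ^ 2 + a ^ 2 * (1 - μ ^ 2)) with hDdef
  have hDnn : 0 ≤ D := Real.sqrt_nonneg _
  have hD2 : D ^ 2 = σ ^ 2 + a ^ 2 * (1 - μ ^ 2) := Real.sq_sqrt (by nlinarith [sq_nonneg σ, mul_pos (pow_pos ha 2) h1μ])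
  have hDpos : 0 < D := by
    rw [hDdef]; apply Real.sqrt_pos.mpr; nlinarith [sq_nonneg σ, mul_pos (pow_pos ha 2) h1μ]
  clear_value D
  set s := (μ * σ + D) / (1 - μ ^ 2) with hsdef
  clear_value s
  have hspos : 0 < s := by
    rw [hsdef]; apply div_pos _ h1μ; nlinarith
  have hUs : Ustar = s ^ 2 := hUstar
  have hsqrtU : Real.sqrt Ustar = s := by rw [hUs, Real.sqrt_sq hspos.le]
  have hUpos : 0 < Ustar := by rw [hUs]; positivity
  have hlin : (1 - μ ^ 2) * s - μ * σ = D := by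
    rw [hsdef]; field_simp; ring
  have hq : ((1 - μ ^ 2) * s - μ * σ) ^ 2 = σ ^ 2 + a ^ 2 * (1 - μ ^ 2) := by
    rw [hlin]; exact hD2
  have hkey : s ^ 2 = (μ * s + σ) ^ 2 + a ^ 2 := by
    nlinarith [hq, h1μ, sq_nonneg s]
  set r := μ + σ / s with hrdef
  clear_value r
  have hr0 : 0 ≤ r := by
    rw [hrdef]
    have : 0 ≤ σ / s := div_nonneg hσ hspos.le
    linarith
  have hr2 : r ^ 2 = 1 - a ^ 2 / Ustar := by
    rw [hrdef, hUs]
    field_simp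
    nlinarith [hkey]
  have hr2le : r ^ 2 ≤ 1 := by
    rw [hr2]
    have : 0 ≤ a ^ 2 / Ustar := by positivity
    linarith
  have hr1 : r ≤ 1 := by nlinarith [hr0, hr2le]
  refine ⟨by rw [hsqrtU, hUs]; exact hkey, ⟨by rw [hsqrtU, ← hrdef]; exact hr2, by
    have : 0 ≤ a ^ 2 / Ustar := by positivity
    linarith⟩, ?_⟩
  intro Uhat hnn hrec t
  rw [hsqrtU, ← hrdef]
  induction t with
  | zero => simp; linarith [hUpos]
  | succ t ih =>
    rw [hrec t]
    set u := Uhat t with hu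
    clear_value u
    have hunn : 0 ≤ u := by rw [hu]; exact hnn t
    have hsu2 : Real.sqrt u ^ 2 = u := Real.sq_sqrt hunn
    have hrpow : 0 ≤ r ^ t * Uhat 0 := mul_nonneg (pow_nonneg hr0 t) (hnn 0)
    by_cases hc : u ≤ Ustar
    · have hsq : Real.sqrt u ≤ s := by
        rw [← hsqrtU]; exact Real.sqrt_le_sqrt hc
      have hnn2 : 0 ≤ μ * Real.sqrt u + σ := by positivity
      have h1' : μ * Real.sqrt u + σ ≤ μ * s + σ := by
        have := mul_le_mul_of_nonneg_left hsq hμ0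
        linarith
      have h1 : (μ * Real.sqrt u + σ) ^ 2 + a ^ 2 ≤ (μ * s + σ) ^ 2 + a ^ 2 := by
        have := pow_le_pow_left₀ hnn2 h1' 2
        linarith
      have h2 : 0 ≤ r ^ (t + 1) * Uhat 0 :=
        mul_nonneg (pow_nonneg hr0 _) (hnn 0)
      linarith [hkey, hUs.ge, hUs.le]
    · push_neg at hc
      have hsge : s ≤ Real.sqrt u := by
        rw [← hsqrtU]; exact Real.sqrt_le_sqrt hc.le
      have hd : 0 ≤ u - s ^ 2 := by
        have := pow_le_pow_left₀ hspos.le hsge 2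
        linarith [hsu2]
      have h3 : s * (Real.sqrt u - s) ≤ u - s ^ 2 := by
        have h := mul_nonneg (sub_nonneg.mpr hsge) (Real.sqrt_nonneg u)
        have hid : u - s ^ 2 - s * (Real.sqrt u - s) = (Real.sqrt u - s) * Real.sqrt u := by
          linear_combination -hsu2
        linarith
      have h3' : Real.sqrt u - s ≤ (u - s ^ 2) / s := by
        rw [le_div_iff₀ hspos]
        linarith [h3, show (Real.sqrt u - s) * s = s * (Real.sqrt u - s) from by ring]
      have hΔ : (μ * Real.sqrt u + σ) ^ 2 + a ^ 2 - s ^ 2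
          = μ ^ 2 * (u - s ^ 2) + 2 * μ * σ * (Real.sqrt u - s) := by
        linear_combination μ ^ 2 * hsu2 - hkey
      have h6 : μ ^ 2 + 2 * μ * σ / s ≤ r := by
        have hrr : r ^ 2 = μ ^ 2 + 2 * μ * (σ / s) + (σ / s) ^ 2 := by
          rw [hrdef]; ring
        have hle2 : μ ^ 2 + 2 * μ * σ / s ≤ r ^ 2 := by
          rw [hrr]
          linarith [sq_nonneg (σ / s), show 2 * μ * (σ / s) = 2 * μ * σ / s from by ring]
        have hr2r : r ^ 2 ≤ r := by
          have := mul_le_mul_of_nonneg_left hr1 hr0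
          linarith [pow_two r, mul_one r]
        linarith
      have h7 : 2 * μ * σ * (Real.sqrt u - s) ≤ 2 * μ * σ * ((u - s ^ 2) / s) :=
        mul_le_mul_of_nonneg_left h3' (by positivity)
      have h8 : (μ ^ 2 + 2 * μ * σ / s) * (u - s ^ 2) ≤ r * (u - s ^ 2) :=
        mul_le_mul_of_nonneg_right h6 hd
      have heq : (μ ^ 2 + 2 * μ * σ / s) * (u - s ^ 2)
          = μ ^ 2 * (u - s ^ 2) + 2 * μ * σ * ((u - s ^ 2) / s) := by ring
      have step : (μ * Real.sqrt u + σ) ^ 2 + a ^ 2 - s ^ 2 ≤ r * (u - s ^ 2) := by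
        rw [hΔ]; linarith [h7, h8, heq.ge, heq.le]
      have hih : u - Ustar ≤ r ^ t * Uhat 0 := by linarith [ih]
      have : r * (u - Ustar) ≤ r * (r ^ t * Uhat 0) :=
        mul_le_mul_of_nonneg_left hih hr0
      rw [hUs] at hih this ⊢
      calc (μ * Real.sqrt u + σ) ^ 2 + a ^ 2 ≤ s ^ 2 + r * (u - s ^ 2) := by linarith
        _ ≤ s ^ 2 + r * (r ^ t * Uhat 0) := by linarith
        _ = r ^ (t + 1) * Uhat 0 + s ^ 2 := by ring
end

section
/- Let 0 < m < L and 0 < α < 2/L, and let μ := μ(m,L,α), so that 0 ≤ μ < 1. For each t ≥ 0, let f_t : ℝ^p → ℝ be differentiable with L-Lipschitz gradient, satisfying the sector condition S(m,L) at a point x*_t ∈ ℝ^p, and let σ_t ≥ 0, c_t ≥ 0, v_t ∈ ℝ^p with ‖x*_{t+1} − x*_t‖ ≤ σ_t and ‖v_t‖ ≤ c_t. Let x₀ ∈ ℝ^p and define x_{t+1} := x_t − α(∇f_t(x_t) + v_t). Then for every natural number T, ∑_{t=0}^{T} ( f_t(x_t) − f_t(x*_t) ) ≤ (L/(1−μ)²)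 ‖x₀ − x*₀‖² + (2L/(1−μ)²) ( ∑_{t=0}^{T−1} σ_t )² + (2Lα²/(1−μ)²) ( ∑_{t=0}^{T−1} c_t )². -/
set_option maxHeartbeats 1000000

open Finset

lemma descent_aux {p : ℕ} (L : ℝ) (hL : 0 < L) (f : EuclideanSpace ℝ (Fin p) → ℝ)
    (hdiff : Differentiable ℝ f)
    (hlip : ∀ a b, ‖gradient f a - gradient f b‖ ≤ L * ‖a - b‖)
    (xst : EuclideanSpace ℝ (Fin p)) (hcrit : gradient f xst = 0)
    (z : EuclideanSpace ℝ (Fin p)) :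
    f z - f xst ≤ L / 2 * ‖z - xst‖ ^ 2 := by
  set d := z - xst with hd
  have hpath : ∀ t : ℝ, HasDerivAt (fun t : ℝ => f (xst + t • d))
      ((inner ℝ (gradient f (xst + t • d)) d : ℝ)) t := by
    intro t
    have h1 : HasDerivAt (fun t : ℝ => xst + t • d) d t := by
      simpa using ((hasDerivAt_id t).smul_const d).const_add xst
    have h2 := ((hdiff (xst + t • d)).hasGradientAt).hasFDerivAt
    have h3 := h2.comp_hasDerivAt t h1
    rw [InnerProductSpace.toDual_apply_apply] at h3
    exact h3
  have hgcont : Continuous (gradient f) := by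
    have : LipschitzWith (Real.toNNReal L) (gradient f) := by
      apply LipschitzWith.of_dist_le_mul
      intro a b
      simpa [dist_eq_norm, Real.coe_toNNReal L hL.le] using hlip a b
    exact this.continuous
  have hcont : Continuous fun t : ℝ => (inner ℝ (gradient f (xst + t • d)) d : ℝ) := by
    apply Continuous.inner
    · exact hgcont.comp (by continuity)
    · exact continuous_const
  have hint : f z - f xst = ∫ t in (0:ℝ)..1, (inner ℝ (gradient f (xst + t • d)) d : ℝ) := by
    have h := intervalIntegral.integral_eq_sub_of_hasDerivAt
      (f := fun t : ℝ => f (xst + t • d)) (fun t _ => hpath t) (hcont.intervalIntegrable 0 1)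
    have e1 : xst + (1:ℝ) • d = z := by simp [hd]
    have e0 : xst + (0:ℝ) • d = xst := by simp
    rw [e1, e0] at h
    exact h.symm
  rw [hint]
  have hb : ∀ t ∈ Set.Icc (0:ℝ) 1,
      (inner ℝ (gradient f (xst + t • d)) d : ℝ) ≤ L * t * ‖d‖ ^ 2 := by
    intro t ht
    have h1 : ‖gradient f (xst + t • d)‖ ≤ L * (t * ‖d‖) := by
      have h := hlip (xst + t • d) xst
      simpa [hcrit, norm_smul, abs_of_nonneg ht.1, mul_assoc] using h
    calc (inner ℝ (gradient f (xst + t • d)) d : ℝ) ≤ ‖gradient f (xst + t • d)‖ * ‖d‖ :=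
        real_inner_le_norm _ _
      _ ≤ L * (t * ‖d‖) * ‖d‖ := mul_le_mul_of_nonneg_right h1 (norm_nonneg _)
      _ = L * t * ‖d‖ ^ 2 := by ring
  calc ∫ t in (0:ℝ)..1, (inner ℝ (gradient f (xst + t • d)) d : ℝ)
      ≤ ∫ t in (0:ℝ)..1, L * t * ‖d‖ ^ 2 := by
        apply intervalIntegral.integral_mono_on zero_le_one (hcont.intervalIntegrable 0 1)
          (by apply Continuous.intervalIntegrable; continuity) hb
    _ = L / 2 * ‖d‖ ^ 2 := by
        have : (fun t : ℝ => L * t * ‖d‖ ^ 2) = fun t : ℝ => (L * ‖d‖ ^ 2) * t := by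
          funext t; ring
        rw [this, intervalIntegral.integral_const_mul, integral_id]
        ring

lemma contract_aux {p : ℕ} (m L α : ℝ) (hm : 0 < m) (hmL : m < L) (hα0 : 0 < α)
    (hα1 : α < 2 / L)
    (d g : EuclideanSpace ℝ (Fin p))
    (hsec : 2 * m * L * ‖d‖ ^ 2 + 2 * ‖g‖ ^ 2 ≤ 2 * (L + m) * (inner ℝ d g : ℝ))
    (hgL : ‖g‖ ≤ L * ‖d‖) :
    ‖d - α • g‖ ≤ (if α ≤ 2 / (m + L) then 1 - m * α else α * L - 1) * ‖d‖ := by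
  have hL : 0 < L := hm.trans hmL
  have hmLpos : 0 < m + L := by linarith
  have hαL : α * L < 2 := by
    have := (lt_div_iff₀ hL).mp hα1
    linarith
  set D := ‖d‖ with hD
  set G := ‖g‖ with hG
  have hD0 : 0 ≤ D := norm_nonneg _
  have hG0 : 0 ≤ G := norm_nonneg _
  have hCS : (inner ℝ d g : ℝ) ≤ D * G := real_inner_le_norm _ _
  have hGL2 : G ^ 2 ≤ L ^ 2 * D ^ 2 := by nlinarith
  have hK : m * L * D ^ 2 + G ^ 2 ≤ (m + L) * (D * G) := by
    nlinarith [hsec, mul_le_mul_of_nonneg_left hCS (by positivity : (0:ℝ) ≤ 2 * (L + m))]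
  have hGm2 : m ^ 2 * D ^ 2 ≤ G ^ 2 := by
    nlinarith [hK, sq_nonneg (m * D - G), hD0, hG0, mul_nonneg hD0 hG0]
  have hexp : ‖d - α • g‖ ^ 2 = D ^ 2 - 2 * α * (inner ℝ d g : ℝ) + α ^ 2 * G ^ 2 := by
    rw [norm_sub_sq_real, real_inner_smul_right, norm_smul]
    simp [abs_of_nonneg hα0.le]
    ring
  set I := (inner ℝ d g : ℝ) with hI
  set μ := (if α ≤ 2 / (m + L) then 1 - m * α else α * L - 1) with hμ
  have hμ0 : 0 ≤ μ := by
    rw [hμ]; split_ifs with h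
    · have h2 : α * (m + L) ≤ 2 := by
        have := (le_div_iff₀ hmLpos).mp h; linarith
      nlinarith
    · have h2 : 2 < α * (m + L) := by
        have := (div_lt_iff₀ hmLpos).mp (not_le.mp h); linarith
      nlinarith
  have hsq : ‖d - α • g‖ ^ 2 ≤ (μ * D) ^ 2 := by
    rw [hexp, hμ]
    split_ifs with h
    · have h2 : α * (m + L) ≤ 2 := by
        have := (le_div_iff₀ hmLpos).mp h; linarith
      have expand : (L + m) * (((1 - m * α) * D) ^ 2 - (D ^ 2 - 2 * α * I + α ^ 2 * G ^ 2))
          = α * (2 * (L + m) * I - (2 * m * L * D ^ 2 + 2 * G ^ 2))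
            + (2 - α * (m + L)) * α * (G ^ 2 - m ^ 2 * D ^ 2) := by ring
      have hX : 0 ≤ (L + m) * (((1 - m * α) * D) ^ 2
          - (D ^ 2 - 2 * α * I + α ^ 2 * G ^ 2)) := by
        rw [expand]
        have t1 : 0 ≤ α * (2 * (L + m) * I - (2 * m * L * D ^ 2 + 2 * G ^ 2)) :=
          mul_nonneg hα0.le (by linarith)
        have t2 : 0 ≤ (2 - α * (m + L)) * α * (G ^ 2 - m ^ 2 * D ^ 2) :=
          mul_nonneg (mul_nonneg (by linarith) hα0.le) (by linarith)
        linarith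
      nlinarith [hX, hmLpos]
    · have h2 : 2 < α * (m + L) := by
        have := (div_lt_iff₀ hmLpos).mp (not_le.mp h); linarith
      have expand : (L + m) * (((α * L - 1) * D) ^ 2 - (D ^ 2 - 2 * α * I + α ^ 2 * G ^ 2))
          = α * (2 * (L + m) * I - (2 * m * L * D ^ 2 + 2 * G ^ 2))
            + (α * (m + L) - 2) * α * (L ^ 2 * D ^ 2 - G ^ 2) := by ring
      have hX : 0 ≤ (L + m) * (((α * L - 1) * D) ^ 2
          - (D ^ 2 - 2 * α * I + α ^ 2 * G ^ 2)) := by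
        rw [expand]
        have t1 : 0 ≤ α * (2 * (L + m) * I - (2 * m * L * D ^ 2 + 2 * G ^ 2)) :=
          mul_nonneg hα0.le (by linarith)
        have t2 : 0 ≤ (α * (m + L) - 2) * α * (L ^ 2 * D ^ 2 - G ^ 2) :=
          mul_nonneg (mul_nonneg (by linarith) hα0.le) (by linarith)
        linarith
      nlinarith [hX, hmLpos]
  have hn := norm_nonneg (d - α • g)
  nlinarith [hsq, mul_nonneg hμ0 hD0, hn]

theorem stmt_18 (p : ℕ) (m L α : ℝ)
    (hm : 0 < m) (hmL : m < L) (hα0 : 0 < α) (hα1 : α < 2 / L)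
    (f : ℕ → EuclideanSpace ℝ (Fin p) → ℝ)
    (xs : ℕ → EuclideanSpace ℝ (Fin p))
    (hdiff : ∀ t, Differentiable ℝ (f t))
    (hlip : ∀ t, ∀ a b : EuclideanSpace ℝ (Fin p),
      ‖gradient (f t) a - gradient (f t) b‖ ≤ L * ‖a - b‖)
    (hcrit : ∀ t, gradient (f t) (xs t) = 0)
    (hsector : ∀ t, ∀ z : EuclideanSpace ℝ (Fin p),
      2 * m * L * ‖z - xs t‖ ^ 2 + 2 * ‖gradient (f t) z‖ ^ 2 ≤
        2 * (L + m) * (@inner ℝ _ _ (z - xs t) (gradient (f t) z)))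
    (σ c : ℕ → ℝ) (hσ : ∀ t, 0 ≤ σ t) (hc : ∀ t, 0 ≤ c t)
    (v : ℕ → EuclideanSpace ℝ (Fin p))
    (hdrift : ∀ t, ‖xs (t + 1) - xs t‖ ≤ σ t)
    (hv : ∀ t, ‖v t‖ ≤ c t)
    (x : ℕ → EuclideanSpace ℝ (Fin p))
    (hrec : ∀ t, x (t + 1) = x t - α • (gradient (f t) (x t) + v t)) :
    ∀ T : ℕ,
      ∑ t ∈ Finset.range (T + 1), (f t (x t) - f t (xs t)) ≤
        L / (1 - (if α ≤ 2 / (m + L) then 1 - m * α else α * L - 1)) ^ 2 * ‖x 0 - xs 0‖ ^ 2 +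
        2 * L / (1 - (if α ≤ 2 / (m + L) then 1 - m * α else α * L - 1)) ^ 2 *
          (∑ t ∈ Finset.range T, σ t) ^ 2 +
        2 * L * α ^ 2 / (1 - (if α ≤ 2 / (m + L) then 1 - m * α else α * L - 1)) ^ 2 *
          (∑ t ∈ Finset.range T, c t) ^ 2 := by
  intro T
  have hL : 0 < L := hm.trans hmL
  have hmLpos : 0 < m + L := by linarith
  set μ := (if α ≤ 2 / (m + L) then 1 - m * α else α * L - 1) with hμ
  have hμ1 : μ < 1 := by
    rw [hμ]; split_ifs with h
    · nlinarith [mul_pos hm hα0]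
    · have := (lt_div_iff₀ hL).mp hα1; linarith
  have hμ0 : 0 ≤ μ := by
    rw [hμ]; split_ifs with h
    · have h2 : α * (m + L) ≤ 2 := by
        have := (le_div_iff₀ hmLpos).mp h; linarith
      nlinarith
    · have h2 : 2 < α * (m + L) := by
        have := (div_lt_iff₀ hmLpos).mp (not_le.mp h); linarith
      nlinarith
  set e := fun t => ‖x t - xs t‖ with he
  have he0 : ∀ t, 0 ≤ e t := fun t => norm_nonneg _
  have hstep : ∀ t, e (t + 1) ≤ μ * e t + (σ t + α * c t) := by
    intro t
    have hgLt : ‖gradient (f t) (x t)‖ ≤ L * ‖x t - xs t‖ := by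
      have h := hlip t (x t) (xs t)
      simpa [hcrit t] using h
    have hcontr := contract_aux m L α hm hmL hα0 hα1 (x t - xs t) (gradient (f t) (x t))
      (hsector t (x t)) hgLt
    have hid : x (t + 1) - xs (t + 1)
        = ((x t - xs t) - α • gradient (f t) (x t)) + (-(α • v t)) + (xs t - xs (t + 1)) := by
      rw [hrec t, smul_add]; abel
    have h2 : ‖-(α • v t)‖ ≤ α * c t := by
      rw [norm_neg, norm_smul, Real.norm_eq_abs, abs_of_nonneg hα0.le]
      exact mul_le_mul_of_nonneg_left (hv t) hα0.le
    have h3 : ‖xs t - xs (t + 1)‖ ≤ σ t := by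
      rw [norm_sub_rev]; exact hdrift t
    calc e (t + 1)
        = ‖((x t - xs t) - α • gradient (f t) (x t)) + (-(α • v t)) + (xs t - xs (t + 1))‖ := by
          rw [he]; simp only; rw [hid]
      _ ≤ ‖(x t - xs t) - α • gradient (f t) (x t)‖ + ‖-(α • v t)‖ + ‖xs t - xs (t + 1)‖ :=
          norm_add₃_le
      _ ≤ μ * e t + (α * c t) + σ t := add_le_add (add_le_add hcontr h2) h3
      _ = μ * e t + (σ t + α * c t) := by ring
  have hE : (1 - μ) * (∑ t ∈ Finset.range (T + 1), e t)
      ≤ e 0 + ((∑ t ∈ Finset.range T, σ t) + α * ∑ t ∈ Finset.range T, c t) := by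
    have h1 : ∑ t ∈ Finset.range (T + 1), e t
        = (∑ t ∈ Finset.range T, e (t + 1)) + e 0 := Finset.sum_range_succ' e T
    have h2 : ∑ t ∈ Finset.range T, e (t + 1)
        ≤ ∑ t ∈ Finset.range T, (μ * e t + (σ t + α * c t)) :=
      Finset.sum_le_sum fun t _ => hstep t
    have h3 : ∑ t ∈ Finset.range T, μ * e t ≤ μ * ∑ t ∈ Finset.range (T + 1), e t := by
      rw [← Finset.mul_sum]
      apply mul_le_mul_of_nonneg_left _ hμ0
      apply Finset.sum_le_sum_of_subset_of_nonneg (Finset.range_subset_range.mpr (Nat.le_succ T))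
      intro i _ _; exact he0 i
    have h4 : ∑ t ∈ Finset.range T, (μ * e t + (σ t + α * c t))
        = (∑ t ∈ Finset.range T, μ * e t)
          + ((∑ t ∈ Finset.range T, σ t) + α * ∑ t ∈ Finset.range T, c t) := by
      rw [Finset.sum_add_distrib, Finset.sum_add_distrib, Finset.mul_sum]
    linarith
  have hf : ∀ t, f t (x t) - f t (xs t) ≤ L / 2 * e t ^ 2 := fun t =>
    descent_aux L hL (f t) (hdiff t) (hlip t) (xs t) (hcrit t) (x t)
  have hsum1 : ∑ t ∈ Finset.range (T + 1), (f t (x t) - f t (xs t))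
      ≤ L / 2 * ∑ t ∈ Finset.range (T + 1), e t ^ 2 := by
    rw [Finset.mul_sum]
    exact Finset.sum_le_sum fun t _ => hf t
  have hsum2 : ∑ t ∈ Finset.range (T + 1), e t ^ 2
      ≤ (∑ t ∈ Finset.range (T + 1), e t) ^ 2 :=
    Finset.sum_sq_le_sq_sum_of_nonneg fun i _ => he0 i
  set A := e 0 with hA
  set B := ∑ t ∈ Finset.range T, σ t with hB
  set C := ∑ t ∈ Finset.range T, c t with hC
  set E := ∑ t ∈ Finset.range (T + 1), e t with hEdef
  have hE0 : 0 ≤ E := Finset.sum_nonneg fun i _ => he0 i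
  have h1μ : 0 < 1 - μ := by linarith
  have hEdiv : E ≤ (A + (B + α * C)) / (1 - μ) := by
    rw [le_div_iff₀ h1μ]
    nlinarith [hE]
  have hEsq : E ^ 2 ≤ ((A + (B + α * C)) / (1 - μ)) ^ 2 := pow_le_pow_left₀ hE0 hEdiv 2
  have hnum : L / 2 * (A + (B + α * C)) ^ 2
      ≤ L * A ^ 2 + 2 * L * B ^ 2 + 2 * L * α ^ 2 * C ^ 2 := by
    nlinarith [sq_nonneg (A - B - α * C), sq_nonneg (B - α * C), hL.le,
      mul_le_mul_of_nonneg_left (sq_nonneg (A - B - α * C)) hL.le,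
      mul_le_mul_of_nonneg_left (sq_nonneg (B - α * C)) hL.le]
  have hsq1μ : 0 < (1 - μ) ^ 2 := pow_pos h1μ 2
  calc ∑ t ∈ Finset.range (T + 1), (f t (x t) - f t (xs t))
      ≤ L / 2 * ∑ t ∈ Finset.range (T + 1), e t ^ 2 := hsum1
    _ ≤ L / 2 * E ^ 2 := by
        apply mul_le_mul_of_nonneg_left hsum2 (by positivity)
    _ ≤ L / 2 * ((A + (B + α * C)) / (1 - μ)) ^ 2 :=
        mul_le_mul_of_nonneg_left hEsq (by positivity)
    _ = (L / 2 * (A + (B + α * C)) ^ 2) / (1 - μ) ^ 2 := by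
        rw [div_pow, ← mul_div_assoc]
    _ ≤ (L * A ^ 2 + 2 * L * B ^ 2 + 2 * L * α ^ 2 * C ^ 2) / (1 - μ) ^ 2 :=
        (div_le_div_iff_of_pos_right hsq1μ).mpr hnum
    _ = L / (1 - μ) ^ 2 * A ^ 2 + 2 * L / (1 - μ) ^ 2 * B ^ 2
        + 2 * L * α ^ 2 / (1 - μ) ^ 2 * C ^ 2 := by
        have hne : (1 - μ) ^ 2 ≠ 0 := ne_of_gt hsq1μ
        field_simp
end

section
/- Let T be a natural number, 0 ≤ γ < 1, L > 0, L_g ≥ 0, and let (Û_t)_{0 ≤ t ≤ T} and (u_t)_{0 ≤ t ≤ T−1} be nonnegative real sequences with √(Û_{t+1}) ≤ γ √(Û_t) + u_t for 0 ≤ t ≤ T−1. For each 0 ≤ t ≤ T, let f_t : ℝ^p → ℝ be differentiable with L-Lipschitz gradient, let g_t : ℝ^p → ℝ be convex and L_g-Lipschitz, set h_t := f_t + g_t, and let x*_t ∈ ℝ^p be a global minimizer of h_t. Let (Ω, 𝔓) be a probability space and, for each t, let x_t : Ω → ℝ^p be a random vector with ‖x_t − x*_t‖² integrable, h_t(x_t)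 − h_t(x*_t) integrable, and E‖x_t − x*_t‖² ≤ Û_t. Then ∑_{t=0}^{T} E( h_t(x_t) − h_t(x*_t) ) ≤ (L/(1−γ)²) Û₀ + (2L_g/(1−γ)) √(Û₀) + (L/(1−γ)²) ( ∑_{t=0}^{T−1} u_t )² + (2L_g/(1−γ)) ∑_{t=0}^{T−1} u_t. -/
open MeasureTheory InnerProductSpace RealInnerProductSpace

lemma descent {E : Type*} [NormedAddCommGroup E] [InnerProductSpace ℝ E] [CompleteSpace E]
    {f : E → ℝ} {L : ℝ} (hdiff : Differentiable ℝ f)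
    (hlip : ∀ a b, ‖gradient f a - gradient f b‖ ≤ L * ‖a - b‖)
    (x y : E) :
    f y ≤ f x + ⟪gradient f x, y - x⟫_ℝ + L / 2 * ‖y - x‖ ^ 2 := by
  set d := y - x with hd
  have hφ : ∀ t : ℝ, HasDerivAt (fun t : ℝ => f (x + t • d))
      ⟪gradient f (x + t • d), d⟫_ℝ t := by
    intro t
    have h1 : HasFDerivAt f ((toDual ℝ E) (gradient f (x + t • d))) (x + t • d) :=
      ((hdiff _).hasGradientAt).hasFDerivAt
    have h2 : HasDerivAt (fun t : ℝ => x + t • d) d t := by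
      simpa using ((hasDerivAt_id t).smul_const d).const_add x
    have := h1.comp_hasDerivAt t h2
    rw [InnerProductSpace.toDual_apply_apply] at this; exact this
  set c : ℝ := ⟪gradient f x, d⟫_ℝ with hc
  set ψ : ℝ → ℝ := fun t => f (x + t • d) - t * c - L / 2 * t ^ 2 * ‖d‖ ^ 2 with hψ
  have hψd : ∀ t : ℝ, HasDerivAt ψ
      (⟪gradient f (x + t • d), d⟫_ℝ - c - L * t * ‖d‖ ^ 2) t := by
    intro t
    have h3 : HasDerivAt (fun t : ℝ => t * c) c t := by
      simpa using (hasDerivAt_id t).mul_const c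
    have h4 : HasDerivAt (fun t : ℝ => L / 2 * t ^ 2 * ‖d‖ ^ 2)
        (L * t * ‖d‖ ^ 2) t := by
      have := ((hasDerivAt_pow 2 t).const_mul (L / 2)).mul_const (‖d‖ ^ 2)
      refine this.congr_deriv ?_
      push_cast; ring
    exact ((hφ t).sub h3).sub h4
  have hanti : AntitoneOn ψ (Set.Icc (0:ℝ) 1) := by
    apply antitoneOn_of_deriv_nonpos (convex_Icc 0 1)
    · exact (Differentiable.continuous fun t => (hψd t).differentiableAt).continuousOn
    · exact fun t _ => (hψd t).differentiableAt.differentiableWithinAt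
    · intro t ht
      rw [interior_Icc] at ht
      rw [(hψd t).deriv]
      have h5 : ⟪gradient f (x + t • d), d⟫_ℝ - c ≤ L * t * ‖d‖ ^ 2 := by
        rw [hc, ← inner_sub_left]
        calc _ ≤ ‖gradient f (x + t • d) - gradient f x‖ * ‖d‖ := real_inner_le_norm _ _
        _ ≤ (L * ‖(x + t • d) - x‖) * ‖d‖ := by
            apply mul_le_mul_of_nonneg_right (hlip _ _) (norm_nonneg _)
        _ = L * t * ‖d‖ ^ 2 := by
            rw [add_sub_cancel_left, norm_smul]
            simp [abs_of_nonneg ht.1.le]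
            ring
      linarith
  have h01 : ψ 1 ≤ ψ 0 := hanti (by simp : (0:ℝ) ∈ Set.Icc (0:ℝ) 1)
    (by norm_num : (1:ℝ) ∈ Set.Icc (0:ℝ) 1) zero_le_one
  have e0 : ψ 0 = f x := by simp [hψ]
  have e1 : ψ 1 = f y - c - L / 2 * ‖d‖ ^ 2 := by
    simp [hψ, hd]
  rw [e0, e1] at h01
  linarith

lemma grad_bound {E : Type*} [NormedAddCommGroup E] [InnerProductSpace ℝ E] [CompleteSpace E]
    {f g : E → ℝ} {L Lg : ℝ} (hL : 0 ≤ L)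
    (hdiff : Differentiable ℝ f)
    (hlip : ∀ a b, ‖gradient f a - gradient f b‖ ≤ L * ‖a - b‖)
    (hglip : ∀ a b, |g a - g b| ≤ Lg * ‖a - b‖)
    (w : E) (hmin : ∀ z, f w + g w ≤ f z + g z) (d : E) :
    ⟪gradient f w, d⟫_ℝ ≤ Lg * ‖d‖ := by
  have key : ∀ s : ℝ, 0 < s → s ≤ 1 →
      ⟪gradient f w, d⟫_ℝ ≤ Lg * ‖d‖ + L / 2 * ‖d‖ ^ 2 * s := by
    intro s hs hs1
    have h1 := descent hdiff hlip w (w - s • d)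
    have h2 := hmin (w - s • d)
    have h3 := hglip w (w - s • d)
    have e1 : w - s • d - w = -(s • d) := by abel
    rw [e1] at h1
    have e2 : ⟪gradient f w, -(s • d)⟫_ℝ = -(s * ⟪gradient f w, d⟫_ℝ) := by
      rw [inner_neg_right, real_inner_smul_right]
    rw [e2] at h1
    have e3 : ‖-(s • d)‖ ^ 2 = s ^ 2 * ‖d‖ ^ 2 := by
      rw [norm_neg, norm_smul, mul_pow]
      simp [abs_of_pos hs]
    rw [e3] at h1
    have e4 : ‖w - (w - s • d)‖ = s * ‖d‖ := by
      have : w - (w - s • d) = s • d := by abel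
      rw [this, norm_smul, Real.norm_eq_abs, abs_of_pos hs]
    rw [e4] at h3
    have h4 : g w - g (w - s • d) ≤ Lg * (s * ‖d‖) := (abs_le.mp h3).2
    -- h2 : f w + g w ≤ f (w - s•d) + g (w - s•d)
    have h5 : -(Lg * (s * ‖d‖)) ≤ g w - g (w - s • d) := (abs_le.mp h3).1
    nlinarith [h1, h2, h5]
  by_contra hcon
  push_neg at hcon
  set ε := ⟪gradient f w, d⟫_ℝ - Lg * ‖d‖ with hε
  have hεpos : 0 < ε := by simp only [hε]; linarith
  have hK : 0 ≤ L / 2 * ‖d‖ ^ 2 := by positivity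
  set K := L / 2 * ‖d‖ ^ 2 with hKdef
  have hs : 0 < min 1 (ε / (2 * (K + 1))) := by positivity
  have hs1 : min 1 (ε / (2 * (K + 1))) ≤ 1 := min_le_left _ _
  have := key _ hs hs1
  have h6 : K * min 1 (ε / (2 * (K + 1))) ≤ K * (ε / (2 * (K + 1))) :=
    mul_le_mul_of_nonneg_left (min_le_right _ _) hK
  have h7 : K * (ε / (2 * (K + 1))) < ε := by
    rw [div_eq_inv_mul]
    have hK1 : 0 < K + 1 := by linarith
    rw [show K * ((2 * (K + 1))⁻¹ * ε) = (K / (2 * (K + 1))) * ε by ring]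
    have : K / (2 * (K + 1)) < 1 := by
      rw [div_lt_one (by linarith)]; linarith
    nlinarith
  linarith

lemma pointwise_bound {E : Type*} [NormedAddCommGroup E] [InnerProductSpace ℝ E] [CompleteSpace E]
    {f g : E → ℝ} {L Lg : ℝ} (hL : 0 ≤ L)
    (hdiff : Differentiable ℝ f)
    (hlip : ∀ a b, ‖gradient f a - gradient f b‖ ≤ L * ‖a - b‖)
    (hglip : ∀ a b, |g a - g b| ≤ Lg * ‖a - b‖)
    (w : E) (hmin : ∀ z, f w + g w ≤ f z + g z) (y : E) :
    (f y + g y) - (f w + g w) ≤ L / 2 * ‖y - w‖ ^ 2 + 2 * Lg * ‖y - w‖ := by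
  have h1 := descent hdiff hlip w y
  have h2 := grad_bound hL hdiff hlip hglip w hmin (y - w)
  have h3 := (abs_le.mp (hglip y w)).2
  linarith

lemma int_norm_le {Ω : Type*} [MeasurableSpace Ω] (P : Measure Ω) [IsProbabilityMeasure P]
    {Y : Ω → ℝ} (hint : Integrable (fun ω => Y ω ^ 2) P)
    (hYm : Integrable Y P) {c : ℝ} (hc0 : 0 ≤ c) (hc : (∫ ω, Y ω ^ 2 ∂P) ≤ c) :
    (∫ ω, Y ω ∂P) ≤ Real.sqrt c := by
  rcases eq_or_lt_of_le hc0 with h0 | hpos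
  · -- c = 0
    have hz : (∫ ω, Y ω ^ 2 ∂P) = 0 :=
      le_antisymm (h0 ▸ hc) (integral_nonneg fun ω => sq_nonneg _)
    have hae : (fun ω => Y ω ^ 2) =ᵐ[P] 0 :=
      (integral_eq_zero_iff_of_nonneg (fun ω => sq_nonneg _) hint).mp hz
    have hae2 : Y =ᵐ[P] 0 := by
      filter_upwards [hae] with ω hω
      exact pow_eq_zero_iff (by norm_num) |>.mp hω
    rw [integral_congr_ae hae2]
    simp [Real.sqrt_nonneg]
  · set s := Real.sqrt c with hs
    have hspos : 0 < s := Real.sqrt_pos.mpr hpos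
    have hss : s ^ 2 = c := Real.sq_sqrt hc0
    have hptw : ∀ ω, Y ω ≤ Y ω ^ 2 / (2 * s) + s / 2 := by
      intro ω
      rw [div_add_div _ _ (by positivity) (by norm_num), le_div_iff₀ (by positivity)]
      nlinarith [sq_nonneg (Y ω - s)]
    have hrint : Integrable (fun ω => Y ω ^ 2 / (2 * s) + s / 2) P := by
      apply Integrable.add (hint.div_const _) (integrable_const _)
    calc (∫ ω, Y ω ∂P) ≤ ∫ ω, (Y ω ^ 2 / (2 * s) + s / 2) ∂P :=
          integral_mono hYm hrint hptw
      _ = (∫ ω, Y ω ^ 2 ∂P) / (2 * s) + s / 2 := by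
          rw [integral_add (hint.div_const _) (integrable_const _), integral_div,
            integral_const]
          simp
      _ ≤ c / (2 * s) + s / 2 := by
          gcongr
      _ = s := by
          rw [← hss]; field_simp; ring

theorem stmt_19 (p T : ℕ) (γ L Lg : ℝ)
    (hγ0 : 0 ≤ γ) (hγ1 : γ < 1) (hL : 0 < L) (hLg : 0 ≤ Lg)
    (Uhat u : ℕ → ℝ)
    (hUnn : ∀ t ≤ T, 0 ≤ Uhat t) (hunn : ∀ t < T, 0 ≤ u t)
    (hrecur : ∀ t < T, Real.sqrt (Uhat (t + 1)) ≤ γ * Real.sqrt (Uhat t) + u t)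
    (f g : ℕ → EuclideanSpace ℝ (Fin p) → ℝ)
    (hdiff : ∀ t ≤ T, Differentiable ℝ (f t))
    (hlip : ∀ t ≤ T, ∀ a b : EuclideanSpace ℝ (Fin p),
      ‖gradient (f t) a - gradient (f t) b‖ ≤ L * ‖a - b‖)
    (hgconv : ∀ t ≤ T, ConvexOn ℝ Set.univ (g t))
    (hglip : ∀ t ≤ T, ∀ a b : EuclideanSpace ℝ (Fin p), |g t a - g t b| ≤ Lg * ‖a - b‖)
    (xs : ℕ → EuclideanSpace ℝ (Fin p))
    (hmin : ∀ t ≤ T, ∀ z, f t (xs t) + g t (xs t) ≤ f t z + g t z)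
    {Ω : Type*} [MeasurableSpace Ω] (P : Measure Ω) [IsProbabilityMeasure P]
    (x : ℕ → Ω → EuclideanSpace ℝ (Fin p))
    (hint1 : ∀ t ≤ T, Integrable (fun ω => ‖x t ω - xs t‖ ^ 2) P)
    (hint2 : ∀ t ≤ T, Integrable
      (fun ω => (f t (x t ω) + g t (x t ω)) - (f t (xs t) + g t (xs t))) P)
    (htrack : ∀ t ≤ T, (∫ ω, ‖x t ω - xs t‖ ^ 2 ∂P) ≤ Uhat t) :
    ∑ t ∈ Finset.range (T + 1),
        (∫ ω, ((f t (x t ω) + g t (x t ω)) - (f t (xs t) + g t (xs t))) ∂P) ≤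
      L / (1 - γ) ^ 2 * Uhat 0 + 2 * Lg / (1 - γ) * Real.sqrt (Uhat 0) +
        L / (1 - γ) ^ 2 * (∑ t ∈ Finset.range T, u t) ^ 2 +
        2 * Lg / (1 - γ) * ∑ t ∈ Finset.range T, u t := by
  have hγ : 0 < 1 - γ := by linarith
  set a : ℕ → ℝ := fun t => Real.sqrt (Uhat t) with ha
  set S : ℝ := ∑ t ∈ Finset.range T, u t with hS
  have hann : ∀ t, 0 ≤ a t := fun t => Real.sqrt_nonneg _
  have hSnn : 0 ≤ S := Finset.sum_nonneg fun t ht => hunn t (Finset.mem_range.mp ht)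
  set A : ℝ := ∑ t ∈ Finset.range (T + 1), a t with hA
  have hAnn : 0 ≤ A := Finset.sum_nonneg fun t _ => hann t
  set B : ℝ := (a 0 + S) / (1 - γ) with hB
  have hBnn : 0 ≤ B := by
    apply div_nonneg _ hγ.le
    have := hann 0; linarith
  -- geometric sum bound
  have hAle : A ≤ B := by
    rw [hB, le_div_iff₀ hγ]
    have e1 : A = (∑ t ∈ Finset.range T, a (t + 1)) + a 0 := Finset.sum_range_succ' a T
    have e2 : A = (∑ t ∈ Finset.range T, a t) + a T := Finset.sum_range_succ a T
    have e3 : ∑ t ∈ Finset.range T, (a (t + 1) - γ * a t) ≤ S := by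
      apply Finset.sum_le_sum
      intro t ht
      have := hrecur t (Finset.mem_range.mp ht)
      simp only [ha]
      linarith
    rw [Finset.sum_sub_distrib] at e3
    have e4 : γ * (∑ t ∈ Finset.range T, a t) ≤ γ * A := by
      apply mul_le_mul_of_nonneg_left _ hγ0
      rw [e2]
      have := hann T
      linarith
    have e5 : ∑ t ∈ Finset.range T, γ * a t = γ * ∑ t ∈ Finset.range T, a t :=
      (Finset.mul_sum _ _ _).symm
    rw [e5] at e3
    nlinarith [e1, e3, e4]
  -- sum of Uhat
  have hU : ∀ t ∈ Finset.range (T + 1), Uhat t ≤ a t * A := by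
    intro t ht
    have htT : t ≤ T := Nat.lt_succ_iff.mp (Finset.mem_range.mp ht)
    have e : Uhat t = a t * a t := by
      simp only [ha]
      rw [Real.mul_self_sqrt (hUnn t htT)]
    rw [e]
    exact mul_le_mul_of_nonneg_left (Finset.single_le_sum (fun i _ => hann i) ht) (hann t)
  have hUsum : ∑ t ∈ Finset.range (T + 1), Uhat t ≤ A ^ 2 := by
    calc ∑ t ∈ Finset.range (T + 1), Uhat t ≤ ∑ t ∈ Finset.range (T + 1), a t * A :=
          Finset.sum_le_sum hU
      _ = A * A := by rw [← Finset.sum_mul]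
      _ = A ^ 2 := (sq A).symm
  -- per-term integral bound
  have hterm : ∀ t ∈ Finset.range (T + 1),
      (∫ ω, ((f t (x t ω) + g t (x t ω)) - (f t (xs t) + g t (xs t))) ∂P) ≤
        L / 2 * Uhat t + 2 * Lg * a t := by
    intro t ht
    have htT : t ≤ T := Nat.lt_succ_iff.mp (Finset.mem_range.mp ht)
    have hnormint : Integrable (fun ω => ‖x t ω - xs t‖) P := by
      apply Integrable.mono' ((integrable_const (1:ℝ)).add (hint1 t htT))
      · have hm := (hint1 t htT).aestronglyMeasurable
        have : (fun ω => ‖x t ω - xs t‖) = fun ω => Real.sqrt (‖x t ω - xs t‖ ^ 2) := by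
          funext ω
          rw [Real.sqrt_sq (norm_nonneg _)]
        rw [this]
        exact Real.continuous_sqrt.comp_aestronglyMeasurable hm
      · filter_upwards with ω
        simp only [Pi.add_apply, Real.norm_eq_abs, abs_norm]
        nlinarith [sq_nonneg (‖x t ω - xs t‖ - 1)]
    have hInorm : (∫ ω, ‖x t ω - xs t‖ ∂P) ≤ a t :=
      int_norm_le P (hint1 t htT) hnormint (hUnn t htT) (htrack t htT)
    have hptw : ∀ ω, ((f t (x t ω) + g t (x t ω)) - (f t (xs t) + g t (xs t))) ≤
        L / 2 * ‖x t ω - xs t‖ ^ 2 + 2 * Lg * ‖x t ω - xs t‖ := fun ω => by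
      have := pointwise_bound hL.le (hdiff t htT) (hlip t htT) (hglip t htT) (xs t)
        (hmin t htT) (x t ω)
      linarith
    have hrint : Integrable
        (fun ω => L / 2 * ‖x t ω - xs t‖ ^ 2 + 2 * Lg * ‖x t ω - xs t‖) P :=
      ((hint1 t htT).const_mul _).add (hnormint.const_mul _)
    calc (∫ ω, ((f t (x t ω) + g t (x t ω)) - (f t (xs t) + g t (xs t))) ∂P)
        ≤ ∫ ω, (L / 2 * ‖x t ω - xs t‖ ^ 2 + 2 * Lg * ‖x t ω - xs t‖) ∂P :=
          integral_mono (hint2 t htT) hrint hptw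
      _ = L / 2 * (∫ ω, ‖x t ω - xs t‖ ^ 2 ∂P) + 2 * Lg * (∫ ω, ‖x t ω - xs t‖ ∂P) := by
          rw [integral_add ((hint1 t htT).const_mul _) (hnormint.const_mul _),
            integral_const_mul, integral_const_mul]
      _ ≤ L / 2 * Uhat t + 2 * Lg * a t :=
          add_le_add (mul_le_mul_of_nonneg_left (htrack t htT) (by linarith))
            (mul_le_mul_of_nonneg_left hInorm (by linarith))
  -- summing up
  have hsum : ∑ t ∈ Finset.range (T + 1),
      (∫ ω, ((f t (x t ω) + g t (x t ω)) - (f t (xs t) + g t (xs t))) ∂P) ≤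
      L / 2 * (∑ t ∈ Finset.range (T + 1), Uhat t) + 2 * Lg * A := by
    calc _ ≤ ∑ t ∈ Finset.range (T + 1), (L / 2 * Uhat t + 2 * Lg * a t) :=
          Finset.sum_le_sum hterm
      _ = _ := by rw [Finset.sum_add_distrib, ← Finset.mul_sum, ← Finset.mul_sum]
  have hmid : L / 2 * (∑ t ∈ Finset.range (T + 1), Uhat t) + 2 * Lg * A ≤
      L / 2 * B ^ 2 + 2 * Lg * B := by
    have hA2 : A ^ 2 ≤ B ^ 2 := by gcongr
    have h1 : ∑ t ∈ Finset.range (T + 1), Uhat t ≤ B ^ 2 := hUsum.trans hA2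
    have h2 : 2 * Lg * A ≤ 2 * Lg * B := mul_le_mul_of_nonneg_left hAle (by linarith)
    nlinarith [hL.le]
  have hU0 : Uhat 0 = a 0 ^ 2 := (Real.sq_sqrt (hUnn 0 (Nat.zero_le T))).symm
  have hfinal : L / 2 * B ^ 2 + 2 * Lg * B ≤
      L / (1 - γ) ^ 2 * Uhat 0 + 2 * Lg / (1 - γ) * a 0 +
        L / (1 - γ) ^ 2 * S ^ 2 + 2 * Lg / (1 - γ) * S := by
    rw [hU0, hB]
    have h1 : L / 2 * ((a 0 + S) ^ 2) ≤ L * (a 0 ^ 2 + S ^ 2) := by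
      nlinarith [sq_nonneg (a 0 - S), hL.le]
    have h2 : (0:ℝ) < (1 - γ) ^ 2 := by positivity
    calc L / 2 * ((a 0 + S) / (1 - γ)) ^ 2 + 2 * Lg * ((a 0 + S) / (1 - γ))
        = (L / 2 * (a 0 + S) ^ 2) / (1 - γ) ^ 2 + 2 * Lg * ((a 0 + S) / (1 - γ)) := by
          rw [div_pow]; ring
      _ ≤ (L * (a 0 ^ 2 + S ^ 2)) / (1 - γ) ^ 2 + 2 * Lg * ((a 0 + S) / (1 - γ)) := by
          gcongr
      _ = L / (1 - γ) ^ 2 * a 0 ^ 2 + 2 * Lg / (1 - γ) * a 0 +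
            L / (1 - γ) ^ 2 * S ^ 2 + 2 * Lg / (1 - γ) * S := by
          field_simp
          ring
  calc ∑ t ∈ Finset.range (T + 1),
      (∫ ω, ((f t (x t ω) + g t (x t ω)) - (f t (xs t) + g t (xs t))) ∂P)
      ≤ L / 2 * (∑ t ∈ Finset.range (T + 1), Uhat t) + 2 * Lg * A := hsum
    _ ≤ L / 2 * B ^ 2 + 2 * Lg * B := hmid
    _ ≤ _ := hfinal
end
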